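/- arXiv:1903.07039 — 2 statements merged into one kernel-verified Lean document; each statement's English description precedes it below -/
import Mathlib

section
/- Let n ≥ 3 and a ∈ EuclideanSpace ℝ n, and let f(ξ) = ⟨a, ξ⟩/‖ξ‖ for ξ ≠ 0. Then ∫_{B \ {0}} ( ‖∇f(ξ)‖² + f(ξ) Δf(ξ) ) dξ = 0, where B is the open unit ball with Lebesgue measure. (This is Green's identity (3.42) from the proof of Lemma 3.7 of the paper: the boundary term vanishes because the radial derivative of f is zero on the unit sphere.) -/
open MeasureTheory

/-- The Laplacian of a real-valued function on `EuclideanSpace ℝ (Fin n)`,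
defined as the trace of the second derivative (sum of the second derivative
evaluated on the standard orthonormal basis). -/
noncomputable def laplacian {n : ℕ} (u : EuclideanSpace ℝ (Fin n) → ℝ)
    (x : EuclideanSpace ℝ (Fin n)) : ℝ :=
  ∑ i : Fin n,
    fderiv ℝ (fderiv ℝ u) x (EuclideanSpace.single i 1) (EuclideanSpace.single i 1)

/-!
Away from the origin, `∇f(ξ) = a/‖ξ‖ - ⟨a, ξ⟩ ξ/‖ξ‖³` and `Δf(ξ) = (1 - n)⟨a, ξ⟩/‖ξ‖³`, so the
integrand is `(‖a‖²‖ξ‖² - n⟨a, ξ⟩²)/‖ξ‖⁴`. Its integral over the ball vanishes by symmetry: a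
reflection carries `a` to `‖a‖ eₖ` without changing the integral, and the `n` integrands obtained
this way sum to zero pointwise because `∑ₖ ⟨eₖ, ξ⟩² = ‖ξ‖²`. If the integrand is not integrable,
the Bochner integral is `0` by convention.
-/

open Metric Module Topology
open scoped RealInnerProductSpace

section Calculus

variable {F : Type*} [NormedAddCommGroup F] [InnerProductSpace ℝ F] {x : F}

theorem hasFDerivAt_norm_of_ne_zero (hx : x ≠ 0) :
    HasFDerivAt (‖·‖) (innerSL ℝ (‖x‖⁻¹ • x)) x := by
  have h := (Real.hasDerivAt_sqrt (pow_ne_zero 2 (norm_ne_zero_iff.2 hx))).comp_hasFDerivAt x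
    (hasStrictFDerivAt_norm_sq x).hasFDerivAt
  simp only [Function.comp_def, Real.sqrt_sq (norm_nonneg _)] at h
  refine h.congr_fderiv ?_
  ext v
  simp only [one_div, mul_inv_rev, smul_apply, coe_innerSL_apply,
    nsmul_eq_mul, Nat.cast_ofNat, smul_eq_mul, map_smul]
  ring

theorem hasFDerivAt_norm_zpow (m : ℤ) (hx : x ≠ 0) :
    HasFDerivAt (fun y : F => ‖y‖ ^ m) (innerSL ℝ ((m * ‖x‖ ^ (m - 2)) • x)) x := by
  have hr : ‖x‖ ≠ 0 := norm_ne_zero_iff.2 hx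
  refine ((hasDerivAt_zpow m ‖x‖ (Or.inl hr)).comp_hasFDerivAt x
    (hasFDerivAt_norm_of_ne_zero hx)).congr_fderiv ?_
  ext v
  simp only [map_smul, smul_apply, coe_innerSL_apply, smul_eq_mul]
  rw [show m - 1 = m - 2 + 1 by ring, zpow_add_one₀ hr]
  field_simp

theorem hasFDerivAt_inner_div_norm (a : F) (hx : x ≠ 0) :
    HasFDerivAt (fun y : F => ⟪a, y⟫ / ‖y‖)
      (innerSL ℝ (‖x‖⁻¹ • a - (⟪a, x⟫ / ‖x‖ ^ 3) • x)) x := by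
  have h := ((innerSL ℝ a).hasFDerivAt (x := x)).mul (hasFDerivAt_norm_zpow (-1) hx)
  simp only [innerSL_apply_apply, zpow_neg_one] at h
  refine h.congr_fderiv ?_
  ext v
  simp only [Int.reduceNeg, Int.cast_neg, Int.cast_one, Int.reduceSub, zpow_neg, zpow_ofNat, neg_mul,
    one_mul, neg_smul, map_neg, map_smul, smul_neg, add_apply,
    neg_apply, smul_apply, coe_innerSL_apply, smul_eq_mul, map_sub,
    sub_apply]
  ring

theorem gradient_inner_div_norm [CompleteSpace F] (a : F) (hx : x ≠ 0) :
    gradient (fun y : F => ⟪a, y⟫ / ‖y‖) x = ‖x‖⁻¹ • a - (⟪a, x⟫ / ‖x‖ ^ 3) • x :=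
  (hasGradientAt_iff_hasFDerivAt.2 (hasFDerivAt_inner_div_norm a hx)).gradient

theorem exists_hasFDerivAt_gradient_inner_div_norm [FiniteDimensional ℝ F] (a : F)
    (hx : x ≠ 0) :
    ∃ G : F →L[ℝ] F, HasFDerivAt (fun y : F => ‖y‖⁻¹ • a - (⟪a, y⟫ / ‖y‖ ^ 3) • y) G x ∧
      LinearMap.trace ℝ F G = (1 - finrank ℝ F) * ⟪a, x⟫ / ‖x‖ ^ 3 := by
  have hr : ‖x‖ ≠ 0 := norm_ne_zero_iff.2 hx
  have h₁ := (hasFDerivAt_norm_zpow (-1) hx).smul (hasFDerivAt_const a x)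
  have h₂ := (((innerSL ℝ a).hasFDerivAt (x := x)).mul (hasFDerivAt_norm_zpow (-3) hx)).smul
    (hasFDerivAt_id x)
  refine ⟨_, (h₁.sub h₂).congr_of_eventuallyEq (.of_forall fun y => ?_), ?_⟩
  · simp [zpow_neg, div_eq_mul_inv]
  · simp only [Int.reduceNeg, zpow_neg, zpow_ofNat, pow_one, smul_zero, Int.cast_neg, Int.cast_one,
      Int.reduceSub, neg_mul, one_mul, neg_smul, map_neg, map_smul, zero_add, coe_innerSL_apply,
      Pi.mul_apply, Int.cast_ofNat, smul_neg, id_eq, ContinuousLinearMap.toLinearMap_sub,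
      ContinuousLinearMap.coe_smulRight, ContinuousLinearMap.toLinearMap_neg,
      ContinuousLinearMap.toLinearMap_smul, ContinuousLinearMap.toLinearMap_innerSL_apply,
      ContinuousLinearMap.toLinearMap_add, ContinuousLinearMap.coe_id, map_sub,
      LinearMap.trace_smulRight, LinearMap.neg_apply, LinearMap.smul_apply, innerₛₗ_apply_apply,
      smul_eq_mul, map_add, LinearMap.trace_id, LinearMap.add_apply, inner_self_eq_norm_sq_to_K,
      Real.ringHom_apply, real_inner_comm x a]
    field_simp
    ring

end Calculus

section Laplacian

variable {n : ℕ}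

theorem laplacian_eq_trace_of_hasGradientAt {u : EuclideanSpace ℝ (Fin n) → ℝ}
    {g : EuclideanSpace ℝ (Fin n) → EuclideanSpace ℝ (Fin n)}
    {G : EuclideanSpace ℝ (Fin n) →L[ℝ] EuclideanSpace ℝ (Fin n)} {x : EuclideanSpace ℝ (Fin n)}
    (hu : ∀ᶠ y in 𝓝 x, HasGradientAt u (g y) y) (hg : HasFDerivAt g G x) :
    laplacian u x = LinearMap.trace ℝ _ (G : EuclideanSpace ℝ (Fin n) →ₗ[ℝ] _) := by
  have hfderiv : fderiv ℝ u =ᶠ[𝓝 x] fun y => innerSL ℝ (g y) :=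
    hu.mono fun y hy => hy.hasFDerivAt.fderiv
  have hu₂ : HasFDerivAt (fderiv ℝ u) ((innerSL ℝ).comp G) x :=
    ((innerSL ℝ).hasFDerivAt.comp x hg).congr_of_eventuallyEq hfderiv
  rw [laplacian, hu₂.fderiv, LinearMap.trace_eq_sum_inner _ (EuclideanSpace.basisFun (Fin n) ℝ)]
  simp [real_inner_comm]

theorem laplacian_inner_div_norm (a : EuclideanSpace ℝ (Fin n)) {x : EuclideanSpace ℝ (Fin n)}
    (hx : x ≠ 0) :
    laplacian (fun y => ⟪a, y⟫ / ‖y‖) x = (1 - n) * ⟪a, x⟫ / ‖x‖ ^ 3 := by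
  obtain ⟨G, hG, htrace⟩ := exists_hasFDerivAt_gradient_inner_div_norm a hx
  have hu : ∀ᶠ y in 𝓝 x,
      HasGradientAt (fun y => ⟪a, y⟫ / ‖y‖) (‖y‖⁻¹ • a - (⟪a, y⟫ / ‖y‖ ^ 3) • y) y :=
    (eventually_ne_nhds hx).mono fun y hy =>
      hasGradientAt_iff_hasFDerivAt.2 (hasFDerivAt_inner_div_norm a hy)
  rw [laplacian_eq_trace_of_hasGradientAt hu hG, htrace, finrank_euclideanSpace_fin]

theorem norm_sq_gradient_add_mul_laplacian_inner_div_norm (a : EuclideanSpace ℝ (Fin n))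
    {x : EuclideanSpace ℝ (Fin n)} (hx : x ≠ 0) :
    ‖gradient (fun y => ⟪a, y⟫ / ‖y‖) x‖ ^ 2 + ⟪a, x⟫ / ‖x‖ * laplacian (fun y => ⟪a, y⟫ / ‖y‖) x
      = (‖a‖ ^ 2 * ‖x‖ ^ 2 - n * ⟪a, x⟫ ^ 2) * (‖x‖ ^ 4)⁻¹ := by
  have hr : ‖x‖ ≠ 0 := norm_ne_zero_iff.2 hx
  rw [gradient_inner_div_norm a hx, laplacian_inner_div_norm a hx, norm_sub_sq_real]
  simp only [norm_smul, real_inner_smul_left, real_inner_smul_right, norm_inv, norm_div, norm_pow,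
    Real.norm_eq_abs, abs_norm, mul_pow, div_pow, sq_abs]
  field_simp
  ring

end Laplacian

section Integral

variable {E : Type*} [NormedAddCommGroup E] [InnerProductSpace ℝ E]

theorem exists_linearIsometryEquiv_apply_eq [CompleteSpace E] {u v : E} (h : ‖u‖ = ‖v‖) :
    ∃ T : E ≃ₗᵢ[ℝ] E, T u = v :=
  ⟨(ℝ ∙ (u - v))ᗮ.reflection, Submodule.reflection_sub h⟩

variable [FiniteDimensional ℝ E] [MeasurableSpace E] [BorelSpace E]

theorem LinearIsometryEquiv.integrableOn_ball_comp_iff (T : E ≃ₗᵢ[ℝ] E) {g : E → ℝ} {r : ℝ} :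
    IntegrableOn (g ∘ T) (ball 0 r) ↔ IntegrableOn g (ball 0 r) := by
  have := T.measurePreserving.integrableOn_comp_preimage T.toHomeomorph.measurableEmbedding
    (f := g) (s := ball 0 r)
  rwa [T.preimage_ball, map_zero] at this

theorem LinearIsometryEquiv.setIntegral_ball_comp (T : E ≃ₗᵢ[ℝ] E) (g : E → ℝ) (r : ℝ) :
    ∫ ξ in ball 0 r, g (T ξ) = ∫ ξ in ball 0 r, g ξ := by
  have := T.measurePreserving.setIntegral_preimage_emb T.toHomeomorph.measurableEmbedding g
    (ball 0 r)
  rwa [T.preimage_ball, map_zero] at this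

theorem integral_ball_norm_sq_mul_sub_finrank_mul_inner_sq (a : E) (r : ℝ) (φ : ℝ → ℝ) :
    ∫ ξ in ball 0 r, (‖a‖ ^ 2 * ‖ξ‖ ^ 2 - finrank ℝ E * ⟪a, ξ⟫ ^ 2) * φ ‖ξ‖ = 0 := by
  set G : E → E → ℝ := fun v ξ => (‖v‖ ^ 2 * ‖ξ‖ ^ 2 - finrank ℝ E * ⟪v, ξ⟫ ^ 2) * φ ‖ξ‖
  change ∫ ξ in ball 0 r, G a ξ = 0
  by_cases hint : IntegrableOn (G a) (ball 0 r)
  swap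
  · exact integral_undef hint
  have h_rot : ∀ v, ‖v‖ = ‖a‖ → ∃ T : E ≃ₗᵢ[ℝ] E, G a ∘ T = G v := by
    intro v hv
    obtain ⟨T, rfl⟩ := exists_linearIsometryEquiv_apply_eq hv
    exact ⟨T, funext fun ξ => by simp only [G, Function.comp_apply, T.inner_map_map, T.norm_map]⟩
  have h_integral : ∀ v, ‖v‖ = ‖a‖ →
      IntegrableOn (G v) (ball 0 r) ∧ ∫ ξ in ball 0 r, G v ξ = ∫ ξ in ball 0 r, G a ξ := by
    intro v hv
    obtain ⟨T, hT⟩ := h_rot v hv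
    rw [← hT]
    exact ⟨T.integrableOn_ball_comp_iff.2 hint, T.setIntegral_ball_comp (G a) r⟩
  set b := stdOrthonormalBasis ℝ E
  have h_norm : ∀ k, ‖‖a‖ • b k‖ = ‖a‖ := by simp [norm_smul, b.orthonormal.1]
  have h_sum : ∀ ξ, ∑ k, G (‖a‖ • b k) ξ = 0 := by
    intro ξ
    simp only [G, h_norm, real_inner_smul_left, mul_pow, ← Finset.sum_mul, Finset.sum_sub_distrib,
      Finset.sum_const, ← Finset.mul_sum, b.sum_sq_inner_right, Finset.card_univ,
      Fintype.card_fin, nsmul_eq_mul]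
    ring
  have := integral_finsetSum Finset.univ fun k _ => (h_integral _ (h_norm k)).1
  simp only [h_sum, integral_zero, fun k => (h_integral _ (h_norm k)).2, Finset.sum_const,
    Finset.card_univ, Fintype.card_fin, nsmul_eq_mul] at this
  rcases Nat.eq_zero_or_pos (finrank ℝ E) with h0 | hpos
  · have : Subsingleton E := finrank_zero_iff.mp h0
    simp [G, Subsingleton.elim _ (0 : E)]
  · exact (mul_eq_zero.mp this.symm).resolve_left (by positivity)

end Integral

theorem stmt_7_general (n : ℕ) (a : EuclideanSpace ℝ (Fin n)) :
    ∫ ξ in Metric.ball (0 : EuclideanSpace ℝ (Fin n)) 1 \ {0},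
        (‖gradient (fun ξ : EuclideanSpace ℝ (Fin n) => (inner ℝ a ξ : ℝ) / ‖ξ‖) ξ‖ ^ 2 +
          ((inner ℝ a ξ : ℝ) / ‖ξ‖) *
            laplacian (fun ξ : EuclideanSpace ℝ (Fin n) => (inner ℝ a ξ : ℝ) / ‖ξ‖) ξ) = 0 := by
  rw [setIntegral_congr_fun (measurableSet_ball.diff (measurableSet_singleton 0)) fun ξ hξ =>
      norm_sq_gradient_add_mul_laplacian_inner_div_norm a hξ.2,
    ← setIntegral_eq_of_subset_of_forall_sdiff_eq_zero measurableSet_ball Set.sdiff_subset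
      fun ξ hξ => by
        obtain rfl : ξ = 0 := by_contra fun h => hξ.2 ⟨hξ.1, h⟩
        simp]
  simpa [finrank_euclideanSpace_fin] using
    integral_ball_norm_sq_mul_sub_finrank_mul_inner_sq a 1 fun t => (t ^ 4)⁻¹

/-- Green's identity (3.42) from the proof of Lemma 3.7: for `n ≥ 3` and
`f(ξ) = ⟨a, ξ⟩/‖ξ‖`, the integral over the punctured unit ball of
`‖∇f‖² + f Δf` (with respect to Lebesgue measure) vanishes, the boundary term
vanishing since the radial derivative of `f` is zero on the unit sphere. -/
theorem stmt_7 (n : ℕ) (hn : 3 ≤ n) (a : EuclideanSpace ℝ (Fin n)) :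
    ∫ ξ in Metric.ball (0 : EuclideanSpace ℝ (Fin n)) 1 \ {0},
        (‖gradient (fun ξ : EuclideanSpace ℝ (Fin n) => (inner ℝ a ξ : ℝ) / ‖ξ‖) ξ‖ ^ 2 +
          ((inner ℝ a ξ : ℝ) / ‖ξ‖) *
            laplacian (fun ξ : EuclideanSpace ℝ (Fin n) => (inner ℝ a ξ : ℝ) / ‖ξ‖) ξ) = 0 :=
  stmt_7_general n a
end

section
/- There exists a constant C > 0, depending only on n, such that for every ρ ∈ (0,1) and every ξ ∈ S^{n−1}: ∫_{S^{n−1}} Ψ_ρ(ξ,θ) ‖ξ − θ‖ dσ(θ) ≤ C (1−ρ)^{1/(2n)}. (Property (3) of Lemma 4.5 of the paper.) -/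
open MeasureTheory

/-- `α_n`: the total surface measure (`(n-1)`-dimensional Hausdorff measure) of the
unit sphere in `EuclideanSpace ℝ (Fin n)`. -/
noncomputable def sphereVol (n : ℕ) : ℝ :=
  ((μH[(n : ℝ) - 1] : Measure (EuclideanSpace ℝ (Fin n)))
    (Metric.sphere (0 : EuclideanSpace ℝ (Fin n)) 1)).toReal

/-- The Poisson kernel of the unit ball: `P(x,θ) = (1 − ‖x‖²)/(α_n ‖x − θ‖ⁿ)`. -/
noncomputable def ballPoissonKernel (n : ℕ) (x θ : EuclideanSpace ℝ (Fin n)) : ℝ :=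
  (1 - ‖x‖ ^ 2) / (sphereVol n * ‖x - θ‖ ^ n)

/-- `Ψ_ρ(ξ,θ) = P(ρξ, θ)` (equation (4.30) of the paper). -/
noncomputable def Psi (n : ℕ) (ρ : ℝ) (ξ θ : EuclideanSpace ℝ (Fin n)) : ℝ :=
  ballPoissonKernel n (ρ • ξ) θ

/-!
Write `r = 1 - ρ`, `s = ‖ξ - θ‖` and `δ = r ^ (1 / (2n))`. The triangle inequality gives
`‖ρξ - θ‖ ≥ max r (s / 2)`, so the integrand is at most `2 r s / (α_n ‖ρξ - θ‖ⁿ)`. Where `s > δ`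
this is `≲ r / δⁿ ≤ δ`. The cap `s ≤ δ` is cut into the dyadic shells `t / 2 < s ≤ t`,
`t = δ / 2 ^ k`: there the integrand is `≲ t ^ (2 - n)`, while the cap of radius `t` has measure
`≲ t ^ (n - 1)`, since it is covered by the image of a ball of radius `2t` in the tangent
hyperplane under the `1`-Lipschitz map `u ↦ (ξ + u) / ‖ξ + u‖`. The geometric series sums to `≲ δ`.
-/

open Metric Set
open scoped ENNReal RealInnerProductSpace

section NormedSpace

variable {E : Type*} [NormedAddCommGroup E] [NormedSpace ℝ E] {ρ : ℝ} {ξ θ : E}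

theorem one_sub_le_norm_smul_sub (hρ : 0 ≤ ρ) (hξ : ‖ξ‖ = 1) (hθ : ‖θ‖ = 1) :
    1 - ρ ≤ ‖ρ • ξ - θ‖ := by
  have := norm_sub_norm_le θ (ρ • ξ)
  rwa [norm_sub_rev, norm_smul, hξ, hθ, Real.norm_of_nonneg hρ, mul_one] at this

theorem norm_sub_le_two_mul_norm_smul_sub (hρ0 : 0 ≤ ρ) (hρ1 : ρ ≤ 1) (hξ : ‖ξ‖ = 1)
    (hθ : ‖θ‖ = 1) : ‖ξ - θ‖ ≤ 2 * ‖ρ • ξ - θ‖ := by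
  have h := norm_sub_le_norm_sub_add_norm_sub ξ (ρ • ξ) θ
  have hξρ : ‖ξ - ρ • ξ‖ = 1 - ρ := by
    rw [show ξ - ρ • ξ = (1 - ρ) • ξ by rw [sub_smul, one_smul], norm_smul, hξ, mul_one,
      Real.norm_of_nonneg (by linarith)]
  linarith [one_sub_le_norm_smul_sub hρ0 hξ hθ]

end NormedSpace

section InnerProductSpace

variable {E : Type*} [NormedAddCommGroup E] [InnerProductSpace ℝ E]

theorem dist_normalize_le_dist {x y : E} (hx : 1 ≤ ‖x‖) (hy : 1 ≤ ‖y‖) :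
    dist (NormedSpace.normalize x) (NormedSpace.normalize y) ≤ dist x y := by
  have hx0 : 0 < ‖x‖ := by linarith
  have hy0 : 0 < ‖y‖ := by linarith
  have key : dist (NormedSpace.normalize x) (NormedSpace.normalize y) ^ 2 * (‖x‖ * ‖y‖) =
      2 * (‖x‖ * ‖y‖ - ⟪x, y⟫) := by
    rw [dist_eq_norm, NormedSpace.normalize, NormedSpace.normalize, norm_sub_sq_real,
      inner_smul_left, inner_smul_right, norm_smul, norm_smul, norm_inv, norm_norm, norm_inv,
      norm_norm, inv_mul_cancel₀ hx0.ne', inv_mul_cancel₀ hy0.ne']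
    simp only [conj_trivial]
    field_simp
    ring
  have hsq : dist x y ^ 2 = ‖x‖ ^ 2 - 2 * ⟪x, y⟫ + ‖y‖ ^ 2 := by
    rw [dist_eq_norm, norm_sub_sq_real]
  refine (pow_le_pow_iff_left₀ dist_nonneg dist_nonneg two_ne_zero).1 ?_
  refine le_of_mul_le_mul_right ?_ (mul_pos hx0 hy0)
  rw [key, hsq]
  nlinarith [mul_nonneg (by nlinarith : (0 : ℝ) ≤ ‖x‖ * ‖y‖ - 1)
      (sub_nonneg.2 (real_inner_le_norm x y)),
    mul_nonneg (sq_nonneg (‖x‖ - ‖y‖)) (mul_pos hx0 hy0).le]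

variable {ξ θ : E} {t : ℝ}

theorem inner_eq_one_sub_norm_sub_sq (hξ : ‖ξ‖ = 1) (hθ : ‖θ‖ = 1) :
    ⟪ξ, θ⟫ = 1 - ‖θ - ξ‖ ^ 2 / 2 := by
  rw [norm_sub_sq_real, hξ, hθ, real_inner_comm]
  ring

theorem norm_inv_inner_smul_sub_le (hξ : ‖ξ‖ = 1) (hθ : ‖θ‖ = 1) (h : ‖θ - ξ‖ ≤ t)
    (ht : t ≤ 1) : ‖⟪ξ, θ⟫⁻¹ • θ - ξ‖ ≤ 2 * t := by
  have hinner := inner_eq_one_sub_norm_sub_sq hξ hθ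
  set a := ⟪ξ, θ⟫
  have hs0 := norm_nonneg (θ - ξ)
  have hst : ‖θ - ξ‖ ^ 2 ≤ t ^ 2 := pow_le_pow_left₀ hs0 h 2
  have ha : 1 / 2 ≤ a := by nlinarith
  have hsq : ‖a⁻¹ • θ - ξ‖ ^ 2 * a ^ 2 = 1 - a ^ 2 := by
    rw [norm_sub_sq_real, inner_smul_left, norm_smul, hξ, hθ, Real.norm_eq_abs,
      abs_inv, abs_of_pos (by linarith), real_inner_comm ξ θ]
    simp only [conj_trivial]
    field_simp
    ring
  refine (pow_le_pow_iff_left₀ (norm_nonneg _) (by linarith) two_ne_zero).1 ?_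
  refine le_of_mul_le_mul_right ?_ (by positivity : 0 < a ^ 2)
  rw [hsq]
  have h1 : 1 - a ^ 2 ≤ ‖θ - ξ‖ ^ 2 := by rw [hinner]; nlinarith [sq_nonneg (‖θ - ξ‖ ^ 2)]
  nlinarith [mul_le_mul_of_nonneg_left (by nlinarith : 1 / 4 ≤ a ^ 2) (sq_nonneg t)]

theorem exists_lipschitzWith_sphere_inter_closedBall_subset_image {m : ℕ}
    (hm : Module.finrank ℝ E = m + 1) (hξ : ‖ξ‖ = 1) :
    ∃ g : EuclideanSpace ℝ (Fin m) → E, LipschitzWith 1 g ∧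
      ∀ t ≤ 1, sphere (0 : E) 1 ∩ closedBall ξ t ⊆ g '' closedBall 0 (2 * t) := by
  have : Fact (Module.finrank ℝ E = m + 1) := ⟨hm⟩
  have hξ0 : ξ ≠ 0 := by rintro rfl; simp at hξ
  set e := (OrthonormalBasis.fromOrthogonalSpanSingleton (𝕜 := ℝ) m hξ0).repr
  have hnorm : ∀ u, 1 ≤ ‖ξ + e.symm u‖ := fun u => by
    have := norm_add_sq_eq_norm_sq_add_norm_sq_real
      (Submodule.mem_orthogonal_singleton_iff_inner_right.1 (e.symm u).2)
    nlinarith [norm_nonneg (ξ + e.symm u), mul_self_nonneg ‖(e.symm u : E)‖]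
  refine ⟨fun u => NormedSpace.normalize (ξ + e.symm u),
    LipschitzWith.of_dist_le_mul fun u v => ?_, ?_⟩
  · rw [NNReal.coe_one, one_mul]
    refine (dist_normalize_le_dist (hnorm u) (hnorm v)).trans_eq ?_
    rw [dist_add_left, ← Subtype.dist_eq, e.symm.dist_map]
  rintro t ht θ ⟨hθS, hθt⟩
  have hθ : ‖θ‖ = 1 := mem_sphere_zero_iff_norm.1 hθS
  have h : ‖θ - ξ‖ ≤ t := by rwa [mem_closedBall, dist_eq_norm] at hθt
  have ha : 0 < ⟪ξ, θ⟫ := by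
    rw [inner_eq_one_sub_norm_sub_sq hξ hθ]
    nlinarith [norm_nonneg (θ - ξ)]
  have hw : ⟪ξ, θ⟫⁻¹ • θ - ξ ∈ (ℝ ∙ ξ)ᗮ := by
    rw [Submodule.mem_orthogonal_singleton_iff_inner_right, inner_sub_right,
      real_inner_smul_right, inv_mul_cancel₀ ha.ne', real_inner_self_eq_norm_sq, hξ]
    norm_num
  refine ⟨e ⟨_, hw⟩, ?_, ?_⟩
  · rw [mem_closedBall, dist_zero_right, e.norm_map, Submodule.coe_norm]
    exact norm_inv_inner_smul_sub_le hξ hθ h ht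
  · simp only [e.symm_apply_apply, add_sub_cancel,
      NormedSpace.normalize_smul_of_pos (inv_pos.2 ha),
      NormedSpace.normalize_eq_self_of_norm_eq_one hθ]

theorem hausdorffMeasure_sphere_inter_closedBall_le [MeasurableSpace E] [BorelSpace E] {m : ℕ}
    (hm : Module.finrank ℝ E = m + 1) (hξ : ‖ξ‖ = 1) (ht0 : 0 ≤ t) (ht1 : t ≤ 1) :
    μH[m] (sphere (0 : E) 1 ∩ closedBall ξ t) ≤
      ENNReal.ofReal ((2 * t) ^ m) * μH[m] (closedBall (0 : EuclideanSpace ℝ (Fin m)) 1) := by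
  obtain ⟨g, hg, hcap⟩ := exists_lipschitzWith_sphere_inter_closedBall_subset_image hm hξ
  calc μH[m] (sphere (0 : E) 1 ∩ closedBall ξ t)
      ≤ μH[m] (g '' closedBall 0 (2 * t)) := measure_mono (hcap t ht1)
    _ ≤ μH[m] (closedBall (0 : EuclideanSpace ℝ (Fin m)) (2 * t)) := by
      simpa using hg.hausdorffMeasure_image_le (Nat.cast_nonneg m) (closedBall 0 (2 * t))
    _ = _ := by
      rw [Measure.addHaar_closedBall' _ _ (by positivity), finrank_euclideanSpace_fin]

end InnerProductSpace

theorem setLIntegral_le_tsum_mul_measure {α : Type*} [MeasurableSpace α] {μ : Measure α}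
    {s : Set α} {f : α → ℝ≥0∞} {B : ℕ → Set α} {c : ℕ → ℝ≥0∞} (hB : ∀ k, MeasurableSet (B k))
    (h : ∀ x ∈ s, ∃ k, x ∈ B k ∧ f x ≤ c k) :
    ∫⁻ x in s, f x ∂μ ≤ ∑' k, c k * μ (B k) := by
  have hmeas : ∀ k, Measurable ((B k).indicator fun _ => c k) := fun k =>
    measurable_const.indicator (hB k)
  calc ∫⁻ x in s, f x ∂μ ≤ ∫⁻ x in s, ∑' k, (B k).indicator (fun _ => c k) x ∂μ :=
        setLIntegral_mono (Measurable.tsum hmeas) fun x hx => by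
          obtain ⟨k, hxk, hfx⟩ := h x hx
          exact hfx.trans ((indicator_of_mem hxk fun _ => c k).symm.le.trans
            (ENNReal.le_tsum (f := fun k => (B k).indicator (fun _ => c k) x) k))
    _ ≤ ∫⁻ x, ∑' k, (B k).indicator (fun _ => c k) x ∂μ := setLIntegral_le_lintegral _ _
    _ = ∑' k, c k * μ (B k) := by
        rw [lintegral_tsum fun k => (hmeas k).aemeasurable]
        exact tsum_congr fun k => lintegral_indicator_const (hB k) _

theorem exists_le_div_two_pow_lt {s δ : ℝ} (hs : 0 < s) (hsδ : s ≤ δ) :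
    ∃ k : ℕ, s ≤ δ / 2 ^ k ∧ δ / 2 ^ k < 2 * s := by
  obtain ⟨k, hk1, hk2⟩ := exists_nat_pow_near ((one_le_div hs).2 hsδ) one_lt_two
  refine ⟨k, (le_div_iff₀ (by positivity)).2 ?_, (div_lt_iff₀ (by positivity)).2 ?_⟩
  · rwa [le_div_iff₀ hs, mul_comm] at hk1
  · rw [div_lt_iff₀ hs, pow_succ] at hk2
    linarith

noncomputable def unitBallMeasure (m : ℕ) : ℝ :=
  (μH[m] (closedBall (0 : EuclideanSpace ℝ (Fin m)) 1)).toReal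

theorem unitBallMeasure_nonneg (m : ℕ) : 0 ≤ unitBallMeasure m :=
  ENNReal.toReal_nonneg

theorem ofReal_unitBallMeasure (m : ℕ) :
    ENNReal.ofReal (unitBallMeasure m) = μH[m] (closedBall (0 : EuclideanSpace ℝ (Fin m)) 1) :=
  ENNReal.ofReal_toReal measure_closedBall_lt_top.ne

section Poisson

variable {n m : ℕ} {ρ : ℝ}

theorem norm_psi_mul_norm_le {ξ θ : EuclideanSpace ℝ (Fin n)} {b : ℝ} (hρ0 : 0 ≤ ρ)
    (hρ1 : ρ ≤ 1) (hξ : ‖ξ‖ = 1) (hα : 0 < sphereVol n) (hb : 0 < b) (hbD : b ≤ ‖ρ • ξ - θ‖ ^ n) :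
    ‖Psi n ρ ξ θ * ‖ξ - θ‖‖ ≤ 2 * (1 - ρ) * ‖ξ - θ‖ / (sphereVol n * b) := by
  have hP : Psi n ρ ξ θ = (1 - ρ ^ 2) / (sphereVol n * ‖ρ • ξ - θ‖ ^ n) := by
    rw [Psi, ballPoissonKernel, norm_smul, hξ, mul_one, Real.norm_of_nonneg hρ0]
  rw [hP, norm_mul, norm_norm, Real.norm_of_nonneg (div_nonneg (by nlinarith) (by positivity)),
    div_mul_eq_mul_div]
  exact div_le_div₀ (by nlinarith [norm_nonneg (ξ - θ)])
    (mul_le_mul_of_nonneg_right (by nlinarith) (norm_nonneg _)) (by positivity)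
    (mul_le_mul_of_nonneg_left hbD hα.le)

theorem norm_psi_mul_norm_le_of_le_of_lt_two_mul {ξ θ : EuclideanSpace ℝ (Fin (m + 1))} {t : ℝ}
    (hρ0 : 0 ≤ ρ) (hρ1 : ρ < 1) (hξ : ‖ξ‖ = 1) (hθ : ‖θ‖ = 1) (hα : 0 < sphereVol (m + 1))
    (ht : ‖ξ - θ‖ ≤ t) (hts : t < 2 * ‖ξ - θ‖) :
    ‖Psi (m + 1) ρ ξ θ * ‖ξ - θ‖‖ ≤ 2 * t / (sphereVol (m + 1) * (t / 4) ^ m) := by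
  have ht0 : 0 < t := by linarith [norm_nonneg (ξ - θ)]
  have hD := norm_sub_le_two_mul_norm_smul_sub hρ0 hρ1.le hξ hθ
  have hbD : (1 - ρ) * (t / 4) ^ m ≤ ‖ρ • ξ - θ‖ ^ (m + 1) := by
    rw [pow_succ, mul_comm]
    exact mul_le_mul (pow_le_pow_left₀ (by positivity) (by linarith) m)
      (one_sub_le_norm_smul_sub hρ0 hξ hθ) (by linarith) (by positivity)
  calc ‖Psi (m + 1) ρ ξ θ * ‖ξ - θ‖‖
      ≤ 2 * (1 - ρ) * ‖ξ - θ‖ / (sphereVol (m + 1) * ((1 - ρ) * (t / 4) ^ m)) :=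
        norm_psi_mul_norm_le hρ0 hρ1.le hξ hα (by have := sub_pos.2 hρ1; positivity) hbD
    _ ≤ 2 * (1 - ρ) * t / (sphereVol (m + 1) * ((1 - ρ) * (t / 4) ^ m)) := by
        have := sub_pos.2 hρ1
        gcongr
    _ = 2 * t / (sphereVol (m + 1) * (t / 4) ^ m) := by
        have := sub_pos.2 hρ1
        field_simp

theorem norm_psi_mul_norm_le_of_lt {ξ θ : EuclideanSpace ℝ (Fin n)} {δ : ℝ} (hρ0 : 0 ≤ ρ)
    (hρ1 : ρ ≤ 1) (hξ : ‖ξ‖ = 1) (hθ : ‖θ‖ = 1) (hα : 0 < sphereVol n) (hδ : 0 < δ)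
    (hr : 1 - ρ ≤ δ ^ (n + 1)) (hδθ : δ < ‖ξ - θ‖) :
    ‖Psi n ρ ξ θ * ‖ξ - θ‖‖ ≤ 2 ^ (n + 2) * δ / sphereVol n := by
  have hD := norm_sub_le_two_mul_norm_smul_sub hρ0 hρ1 hξ hθ
  have hs2 : ‖ξ - θ‖ ≤ 2 := (norm_sub_le ξ θ).trans (by rw [hξ, hθ]; norm_num)
  calc ‖Psi n ρ ξ θ * ‖ξ - θ‖‖ ≤ 2 * (1 - ρ) * ‖ξ - θ‖ / (sphereVol n * (δ / 2) ^ n) :=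
        norm_psi_mul_norm_le hρ0 hρ1 hξ hα (by positivity)
          (pow_le_pow_left₀ (by positivity) (by linarith) n)
    _ ≤ 2 * δ ^ (n + 1) * 2 / (sphereVol n * (δ / 2) ^ n) := by gcongr
    _ = 2 ^ (n + 2) * δ / sphereVol n := by
        rw [div_pow]
        field_simp
        ring

end Poisson

section Integral

variable {n m : ℕ} {ρ : ℝ}

theorem lintegral_sphere_inter_closedBall_le {ξ : EuclideanSpace ℝ (Fin (m + 1))} {δ : ℝ}
    (hρ0 : 0 ≤ ρ) (hρ1 : ρ < 1) (hξ : ‖ξ‖ = 1) (hα : 0 < sphereVol (m + 1)) (hδ0 : 0 < δ)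
    (hδ1 : δ ≤ 1) :
    ∫⁻ θ in sphere (0 : EuclideanSpace ℝ (Fin (m + 1))) 1 ∩ closedBall ξ δ,
        ENNReal.ofReal ‖Psi (m + 1) ρ ξ θ * ‖ξ - θ‖‖ ∂μH[((m + 1 : ℕ) : ℝ) - 1] ≤
      ENNReal.ofReal (4 * 8 ^ m * unitBallMeasure m * δ / sphereVol (m + 1)) := by
  have hdim : ((m + 1 : ℕ) : ℝ) - 1 = m := by push_cast; ring
  rw [hdim]
  set A := unitBallMeasure m
  have hA : 0 ≤ A := unitBallMeasure_nonneg m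
  set α := sphereVol (m + 1)
  have hterm : ∀ k : ℕ, ENNReal.ofReal (2 * (δ / 2 ^ k) / (α * (δ / 2 ^ k / 4) ^ m)) *
      μH[m] (sphere 0 1 ∩ closedBall ξ (δ / 2 ^ k)) ≤
        ENNReal.ofReal (4 * 8 ^ m * A * δ / α / 2 / 2 ^ k) := by
    intro k
    have ht0 : 0 < δ / 2 ^ k := by positivity
    have ht1 : δ / 2 ^ k ≤ 1 := (div_le_self hδ0.le (one_le_pow₀ one_le_two)).trans hδ1
    calc _ ≤ ENNReal.ofReal (2 * (δ / 2 ^ k) / (α * (δ / 2 ^ k / 4) ^ m)) *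
          (ENNReal.ofReal ((2 * (δ / 2 ^ k)) ^ m) * ENNReal.ofReal A) := by
          rw [ofReal_unitBallMeasure]
          gcongr
          exact hausdorffMeasure_sphere_inter_closedBall_le finrank_euclideanSpace_fin hξ
            ht0.le ht1
      _ = _ := by
          rw [← ENNReal.ofReal_mul (by positivity), ← ENNReal.ofReal_mul (by positivity)]
          congr 1
          rw [show (8 : ℝ) ^ m = 2 ^ m * 4 ^ m by rw [← mul_pow]; norm_num, mul_pow, div_pow]
          field_simp
          ring
  calc _ ≤ ∑' k, ENNReal.ofReal (2 * (δ / 2 ^ k) / (α * (δ / 2 ^ k / 4) ^ m)) *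
        μH[m] (sphere 0 1 ∩ closedBall ξ (δ / 2 ^ k)) := by
        refine setLIntegral_le_tsum_mul_measure
          (fun k => isClosed_sphere.measurableSet.inter measurableSet_closedBall) ?_
        rintro θ ⟨hθS, hθδ⟩
        have hθ : ‖θ‖ = 1 := mem_sphere_zero_iff_norm.1 hθS
        rw [mem_closedBall, dist_eq_norm, norm_sub_rev] at hθδ
        rcases (norm_nonneg (ξ - θ)).eq_or_lt with h0 | hpos
        · refine ⟨0, ⟨hθS, by rwa [mem_closedBall, dist_eq_norm, norm_sub_rev, pow_zero,
            div_one]⟩, ?_⟩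
          rw [← h0]
          simp
        · obtain ⟨k, hk1, hk2⟩ := exists_le_div_two_pow_lt hpos hθδ
          exact ⟨k, ⟨hθS, by rwa [mem_closedBall, dist_eq_norm, norm_sub_rev]⟩,
            ENNReal.ofReal_le_ofReal
              (norm_psi_mul_norm_le_of_le_of_lt_two_mul hρ0 hρ1 hξ hθ hα hk1 hk2)⟩
    _ ≤ ∑' k, ENNReal.ofReal (4 * 8 ^ m * A * δ / α / 2 / 2 ^ k) := ENNReal.tsum_le_tsum hterm
    _ = _ := by
        rw [← ENNReal.ofReal_tsum_of_nonneg (fun k => by positivity) (summable_geometric_two' _),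
          tsum_geometric_two']

theorem lintegral_sphere_diff_closedBall_le {ξ : EuclideanSpace ℝ (Fin n)} {δ : ℝ}
    (hρ0 : 0 ≤ ρ) (hρ1 : ρ ≤ 1) (hξ : ‖ξ‖ = 1) (hα : 0 < sphereVol n) (hδ : 0 < δ)
    (hr : 1 - ρ ≤ δ ^ (n + 1)) :
    ∫⁻ θ in sphere (0 : EuclideanSpace ℝ (Fin n)) 1 \ closedBall ξ δ,
        ENNReal.ofReal ‖Psi n ρ ξ θ * ‖ξ - θ‖‖ ∂μH[(n : ℝ) - 1] ≤
      ENNReal.ofReal (2 ^ (n + 2) * δ) := by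
  have hS : μH[(n : ℝ) - 1] (sphere (0 : EuclideanSpace ℝ (Fin n)) 1) =
      ENNReal.ofReal (sphereVol n) :=
    (ENNReal.ofReal_toReal (ENNReal.toReal_pos_iff.1 hα).2.ne).symm
  calc _ ≤ ∫⁻ _ in sphere (0 : EuclideanSpace ℝ (Fin n)) 1 \ closedBall ξ δ,
        ENNReal.ofReal (2 ^ (n + 2) * δ / sphereVol n) ∂μH[(n : ℝ) - 1] := by
        refine setLIntegral_mono measurable_const fun θ ⟨hθS, hθδ⟩ => ?_
        rw [mem_closedBall, not_le, dist_eq_norm, norm_sub_rev] at hθδ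
        exact ENNReal.ofReal_le_ofReal (norm_psi_mul_norm_le_of_lt hρ0 hρ1 hξ
          (mem_sphere_zero_iff_norm.1 hθS) hα hδ hr hθδ)
    _ ≤ ENNReal.ofReal (2 ^ (n + 2) * δ / sphereVol n) * ENNReal.ofReal (sphereVol n) := by
        rw [setLIntegral_const, ← hS]
        gcongr
        exact sdiff_subset
    _ = _ := by
        rw [← ENNReal.ofReal_mul (by positivity)]
        congr 1
        field_simp

theorem le_rpow_one_div_two_mul_pow {r : ℝ} (hr0 : 0 < r) (hr1 : r ≤ 1) (hn : 1 ≤ n) :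
    r ≤ (r ^ ((1 : ℝ) / (2 * n))) ^ (n + 1) := by
  have hn' : (1 : ℝ) ≤ n := by exact_mod_cast hn
  rw [← Real.rpow_natCast, ← Real.rpow_mul hr0.le]
  conv_lhs => rw [← Real.rpow_one r]
  refine Real.rpow_le_rpow_of_exponent_ge hr0 hr1 ?_
  rw [div_mul_eq_mul_div, one_mul, div_le_one (by positivity)]
  push_cast
  linarith

theorem lintegral_sphere_norm_psi_mul_norm_le {ξ : EuclideanSpace ℝ (Fin (m + 1))}
    (hρ : ρ ∈ Ioo 0 1) (hξ : ‖ξ‖ = 1) (hα : 0 < sphereVol (m + 1)) :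
    ∫⁻ θ in sphere (0 : EuclideanSpace ℝ (Fin (m + 1))) 1,
        ENNReal.ofReal ‖Psi (m + 1) ρ ξ θ * ‖ξ - θ‖‖ ∂μH[((m + 1 : ℕ) : ℝ) - 1] ≤
      ENNReal.ofReal ((4 * 8 ^ m * unitBallMeasure m / sphereVol (m + 1) + 2 ^ (m + 3)) *
        (1 - ρ) ^ ((1 : ℝ) / (2 * ((m + 1 : ℕ) : ℝ)))) := by
  obtain ⟨hρ0, hρ1⟩ := hρ
  set δ := (1 - ρ) ^ ((1 : ℝ) / (2 * ((m + 1 : ℕ) : ℝ)))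
  have hδ0 : 0 < δ := Real.rpow_pos_of_pos (sub_pos.2 hρ1) _
  have hδ1 : δ ≤ 1 := Real.rpow_le_one (by linarith) (by linarith) (by positivity)
  have hr : 1 - ρ ≤ δ ^ (m + 1 + 1) :=
    le_rpow_one_div_two_mul_pow (sub_pos.2 hρ1) (by linarith) (Nat.le_add_left 1 m)
  have hA := unitBallMeasure_nonneg m
  rw [← lintegral_inter_add_sdiff _ _ (measurableSet_closedBall (x := ξ) (ε := δ))]
  calc _ ≤ ENNReal.ofReal (4 * 8 ^ m * unitBallMeasure m * δ / sphereVol (m + 1)) +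
          ENNReal.ofReal (2 ^ (m + 1 + 2) * δ) :=
        add_le_add (lintegral_sphere_inter_closedBall_le hρ0.le hρ1 hξ hα hδ0 hδ1)
          (lintegral_sphere_diff_closedBall_le hρ0.le hρ1.le hξ hα hδ0 hr)
    _ = _ := by
        rw [← ENNReal.ofReal_add (by positivity) (by positivity)]
        congr 1
        ring

end Integral

theorem stmt_10_general (n : ℕ) :
    ∃ C : ℝ, 0 < C ∧ ∀ ρ ∈ Set.Ioo (0 : ℝ) 1,
      ∀ ξ ∈ Metric.sphere (0 : EuclideanSpace ℝ (Fin n)) 1,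
        ∫ θ in Metric.sphere (0 : EuclideanSpace ℝ (Fin n)) 1,
            Psi n ρ ξ θ * ‖ξ - θ‖ ∂(μH[(n : ℝ) - 1]) ≤
          C * (1 - ρ) ^ ((1 : ℝ) / (2 * n)) := by
  obtain _ | m := n
  · refine ⟨1, one_pos, fun ρ hρ ξ _ => ?_⟩
    rw [sphere_eq_empty_of_subsingleton one_ne_zero, Measure.restrict_empty, integral_zero_measure]
    exact mul_nonneg zero_le_one (Real.rpow_nonneg (by linarith [hρ.2]) _)
  rcases eq_or_lt_of_le (show 0 ≤ sphereVol (m + 1) from ENNReal.toReal_nonneg) with hα | hα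
  · -- a vanishing `sphereVol` makes `Psi` identically zero, by division by zero
    refine ⟨1, one_pos, fun ρ hρ ξ _ => ?_⟩
    simp only [Psi, ballPoissonKernel, ← hα, zero_mul, div_zero, integral_zero]
    exact mul_nonneg zero_le_one (Real.rpow_nonneg (by linarith [hρ.2]) _)
  have hA := unitBallMeasure_nonneg m
  refine ⟨4 * 8 ^ m * unitBallMeasure m / sphereVol (m + 1) + 2 ^ (m + 3), by positivity,
    fun ρ hρ ξ hξ => ?_⟩
  calc _ ≤ ‖∫ θ in sphere (0 : EuclideanSpace ℝ (Fin (m + 1))) 1,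
        Psi (m + 1) ρ ξ θ * ‖ξ - θ‖ ∂(μH[((m + 1 : ℕ) : ℝ) - 1])‖ := Real.le_norm_self _
    _ ≤ _ := norm_integral_le_lintegral_norm _
    _ ≤ _ := ENNReal.toReal_le_of_le_ofReal (by have := hρ.2; positivity)
        (lintegral_sphere_norm_psi_mul_norm_le hρ (mem_sphere_zero_iff_norm.1 hξ) hα)

/-- Property (3) of Lemma 4.5: there is a constant `C > 0` depending only on `n`
such that for every `ρ ∈ (0,1)` and every `ξ` on the unit sphere,
`∫_{S^{n-1}} Ψ_ρ(ξ,θ) ‖ξ − θ‖ dσ(θ) ≤ C (1−ρ)^{1/(2n)}`. -/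
theorem stmt_10 (n : ℕ) (hn : 2 ≤ n) :
    ∃ C : ℝ, 0 < C ∧ ∀ ρ ∈ Set.Ioo (0 : ℝ) 1,
      ∀ ξ ∈ Metric.sphere (0 : EuclideanSpace ℝ (Fin n)) 1,
        ∫ θ in Metric.sphere (0 : EuclideanSpace ℝ (Fin n)) 1,
            Psi n ρ ξ θ * ‖ξ - θ‖ ∂(μH[(n : ℝ) - 1]) ≤
          C * (1 - ρ) ^ ((1 : ℝ) / (2 * n)) :=
  stmt_10_general n
end
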